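/- The infimum over score vectors of FUJI is not attained: for every ranking r with fixed ordering and every k < n, and every candidate minimizing ranking s, there exists another ranking s' (with the same reverse ordering) with FUJI(r, s', k) < FUJI(r, s, k); in particular, as the score ratios between consecutive ranks tend to infinity, FUJI(r, s, k) → J(r, s, k) = max(0, 2k−n)/min(2k, n) but never attains this value when all scores are positive. -/

import Mathlib

open Finset Filter
open scoped Classical

noncomputable def rankOf {n : ℕ} (r : Fin n → ℝ) (i : Fin n) : ℕ :=
  (Finset.univ.filter (fun j => r i ≤ r j)).card

noncomputable def topk {n : ℕ} (r : Fin n → ℝ) (k : ℕ) : Finset (Fin n) :=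
  Finset.univ.filter (fun i => rankOf r i ≤ k)

noncomputable def jac {n : ℕ} (r s : Fin n → ℝ) (k : ℕ) : ℝ :=
  ((topk r k ∩ topk s k).card : ℝ) / ((topk r k ∪ topk s k).card : ℝ)

noncomputable def kthScore {n : ℕ} (r : Fin n → ℝ) (k : ℕ) : ℝ :=
  if h : (topk r k).Nonempty then (topk r k).inf' h r else 0

noncomputable def fmu {n : ℕ} (r : Fin n → ℝ) (k : ℕ) (i : Fin n) : ℝ :=
  if i ∈ topk r k then 1 else r i / kthScore r k

noncomputable def fuji {n : ℕ} (r s : Fin n → ℝ) (k : ℕ) : ℝ :=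
  (∑ x ∈ topk r k ∪ topk s k, min (fmu r k x) (fmu s k x)) /
  (∑ x ∈ topk r k ∪ topk s k, max (fmu r k x) (fmu s k x))

/-! Every item of a top-`k` set has membership `1` there, and all memberships are at most `1`.
Hence the denominator of FUJI is `|A ∪ B|`, while the numerator is `|A ∩ B|` plus the
memberships of the items lying in only one of the top-`k` sets `A`, `B`. These are positive, so
FUJI exceeds the Jaccard index `|A ∩ B| / |A ∪ B|`; for a reversed pair `A \ B` contains the
top item of `r`. Cubing the scores of `s` keeps all ranks, but cubes the memberships below the
`k`-th score, which lie in `(0, 1)`, and so strictly lowers FUJI. -/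

section Rank

variable {n : ℕ} {r : Fin n → ℝ} {k : ℕ}

lemma rankOf_le_rankOf_of_le {x y : Fin n} (h : r y ≤ r x) : rankOf r x ≤ rankOf r y :=
  card_le_card (monotone_filter_right _ fun _ _ hj => h.trans hj)

lemma rankOf_lt_rankOf_of_lt {x y : Fin n} (h : r y < r x) : rankOf r x < rankOf r y := by
  refine card_lt_card ((ssubset_iff_of_subset
    (monotone_filter_right _ fun _ _ hj => h.le.trans hj)).2 ⟨y, ?_, ?_⟩) <;> simp [h]

lemma lt_of_rankOf_lt_rankOf {x y : Fin n} (h : rankOf r x < rankOf r y) : r y < r x :=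
  lt_of_not_ge fun h' => (rankOf_le_rankOf_of_le h').not_gt h

lemma one_le_rankOf (x : Fin n) : 1 ≤ rankOf r x :=
  card_pos.2 ⟨x, by simp⟩

lemma rankOf_le (x : Fin n) : rankOf r x ≤ n :=
  (card_filter_le _ _).trans_eq (card_fin n)

lemma rankOf_injective (hr : Function.Injective r) : Function.Injective (rankOf r) := by
  intro x y hxy
  rcases lt_trichotomy (r x) (r y) with h | h | h
  · exact absurd hxy (rankOf_lt_rankOf_of_lt h).ne'
  · exact hr h
  · exact absurd hxy (rankOf_lt_rankOf_of_lt h).ne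

lemma image_rankOf (hr : Function.Injective r) : univ.image (rankOf r) = Icc 1 n := by
  refine eq_of_subset_of_card_le (fun m hm => ?_) ?_
  · obtain ⟨x, -, rfl⟩ := mem_image.1 hm
    exact mem_Icc.2 ⟨one_le_rankOf x, rankOf_le x⟩
  · simp [card_image_of_injective _ (rankOf_injective hr)]

lemma card_filter_rankOf (hr : Function.Injective r) (p : ℕ → Prop) [DecidablePred p] :
    #{x | p (rankOf r x)} = #{m ∈ Icc 1 n | p m} := by
  rw [← image_rankOf hr, filter_image, card_image_of_injective _ (rankOf_injective hr)]

lemma exists_rankOf_eq_one (hr : Function.Injective r) (hn : 1 ≤ n) : ∃ x, rankOf r x = 1 := by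
  have h1 : 1 ∈ univ.image (rankOf r) := image_rankOf hr ▸ mem_Icc.2 ⟨le_rfl, hn⟩
  simpa using h1

lemma mem_topk {x : Fin n} : x ∈ topk r k ↔ rankOf r x ≤ k := by
  simp [topk]

lemma card_topk (hr : Function.Injective r) (hk : k ≤ n) : #(topk r k) = k := by
  rw [topk, card_filter_rankOf hr (· ≤ k)]
  have : {m ∈ Icc 1 n | m ≤ k} = Icc 1 k := by
    ext m
    simp only [mem_filter, mem_Icc]
    omega
  simp [this]

lemma topk_nonempty (hr : Function.Injective r) (hk1 : 1 ≤ k) (hk : k ≤ n) :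
    (topk r k).Nonempty := by
  rw [← card_pos, card_topk hr hk]
  omega

end Rank

section Membership

variable {n : ℕ} {r : Fin n → ℝ} {k : ℕ} {x : Fin n}

lemma kthScore_eq_inf' (hne : (topk r k).Nonempty) : kthScore r k = (topk r k).inf' hne r :=
  dif_pos hne

lemma kthScore_pos (hrpos : ∀ i, 0 < r i) (hne : (topk r k).Nonempty) : 0 < kthScore r k := by
  obtain ⟨i, -, hi⟩ := exists_mem_eq_inf' hne r
  rw [kthScore_eq_inf' hne, hi]
  exact hrpos i

lemma lt_kthScore (hne : (topk r k).Nonempty) (hx : x ∉ topk r k) : r x < kthScore r k := by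
  rw [kthScore_eq_inf' hne, lt_inf'_iff]
  intro y hy
  rw [mem_topk] at hx hy
  exact lt_of_rankOf_lt_rankOf (by omega)

lemma fmu_of_mem (hx : x ∈ topk r k) : fmu r k x = 1 :=
  if_pos hx

lemma fmu_of_notMem (hx : x ∉ topk r k) : fmu r k x = r x / kthScore r k :=
  if_neg hx

lemma fmu_pos (hrpos : ∀ i, 0 < r i) (hne : (topk r k).Nonempty) : 0 < fmu r k x := by
  by_cases hx : x ∈ topk r k
  · simp [fmu_of_mem hx]
  · rw [fmu_of_notMem hx]
    exact div_pos (hrpos x) (kthScore_pos hrpos hne)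

lemma fmu_lt_one (hrpos : ∀ i, 0 < r i) (hne : (topk r k).Nonempty) (hx : x ∉ topk r k) :
    fmu r k x < 1 := by
  rw [fmu_of_notMem hx, div_lt_one (kthScore_pos hrpos hne)]
  exact lt_kthScore hne hx

lemma fmu_le_one (hrpos : ∀ i, 0 < r i) (hne : (topk r k).Nonempty) : fmu r k x ≤ 1 := by
  by_cases hx : x ∈ topk r k
  · exact (fmu_of_mem hx).le
  · exact (fmu_lt_one hrpos hne hx).le

end Membership

section Fuji

variable {n : ℕ} {r s : Fin n → ℝ} {k : ℕ}

lemma sum_max_fmu (hrpos : ∀ i, 0 < r i) (hspos : ∀ i, 0 < s i)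
    (hner : (topk r k).Nonempty) (hnes : (topk s k).Nonempty) :
    ∑ x ∈ topk r k ∪ topk s k, max (fmu r k x) (fmu s k x) = #(topk r k ∪ topk s k) := by
  rw [card_eq_sum_ones, Nat.cast_sum, Nat.cast_one]
  refine sum_congr rfl fun x hx => ?_
  rcases mem_union.1 hx with hx | hx
  · rw [fmu_of_mem hx, max_eq_left (fmu_le_one hspos hnes)]
  · rw [fmu_of_mem hx, max_eq_right (fmu_le_one hrpos hner)]

lemma sum_min_fmu (hrpos : ∀ i, 0 < r i) (hspos : ∀ i, 0 < s i)
    (hner : (topk r k).Nonempty) (hnes : (topk s k).Nonempty) :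
    ∑ x ∈ topk r k ∪ topk s k, min (fmu r k x) (fmu s k x) =
      #(topk r k ∩ topk s k) + ∑ x ∈ topk r k \ topk s k, fmu s k x +
        ∑ x ∈ topk s k \ topk r k, fmu r k x := by
  have hdisj : Disjoint (topk r k \ topk s k ∪ topk s k \ topk r k) (topk r k ∩ topk s k) :=
    disjoint_union_left.2
      ⟨disjoint_sdiff_inter _ _, inter_comm (topk r k) _ ▸ disjoint_sdiff_inter _ _⟩
  rw [union_eq_sdiff_union_sdiff_union_inter, sum_union hdisj, sum_union disjoint_sdiff_sdiff,
    card_eq_sum_ones, Nat.cast_sum, Nat.cast_one]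
  have h1 : ∀ x ∈ topk r k \ topk s k, min (fmu r k x) (fmu s k x) = fmu s k x := fun x hx =>
    by rw [fmu_of_mem (mem_sdiff.1 hx).1, min_eq_right (fmu_le_one hspos hnes)]
  have h2 : ∀ x ∈ topk s k \ topk r k, min (fmu r k x) (fmu s k x) = fmu r k x := fun x hx =>
    by rw [fmu_of_mem (mem_sdiff.1 hx).1, min_eq_left (fmu_le_one hrpos hner)]
  have h3 : ∀ x ∈ topk r k ∩ topk s k, min (fmu r k x) (fmu s k x) = 1 := fun x hx =>
    by rw [fmu_of_mem (mem_inter.1 hx).1, fmu_of_mem (mem_inter.1 hx).2, min_self]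
  rw [sum_congr rfl h1, sum_congr rfl h2, sum_congr rfl h3]
  ring

lemma fuji_eq (hrpos : ∀ i, 0 < r i) (hspos : ∀ i, 0 < s i)
    (hner : (topk r k).Nonempty) (hnes : (topk s k).Nonempty) :
    fuji r s k = (#(topk r k ∩ topk s k) + ∑ x ∈ topk r k \ topk s k, fmu s k x +
      ∑ x ∈ topk s k \ topk r k, fmu r k x) / #(topk r k ∪ topk s k) := by
  rw [fuji, sum_min_fmu hrpos hspos hner hnes, sum_max_fmu hrpos hspos hner hnes]

lemma jac_lt_fuji (hrpos : ∀ i, 0 < r i) (hspos : ∀ i, 0 < s i)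
    (hner : (topk r k).Nonempty) (hnes : (topk s k).Nonempty)
    (hdiff : (topk r k \ topk s k).Nonempty) : jac r s k < fuji r s k := by
  have hU : (0 : ℝ) < #(topk r k ∪ topk s k) := by
    exact_mod_cast card_pos.2 (hdiff.mono (sdiff_subset.trans subset_union_left))
  have hrs : 0 < ∑ x ∈ topk r k \ topk s k, fmu s k x :=
    sum_pos (fun _ _ => fmu_pos hspos hnes) hdiff
  have hsr : 0 ≤ ∑ x ∈ topk s k \ topk r k, fmu r k x :=
    sum_nonneg fun _ _ => (fmu_pos hrpos hner).le
  rw [fuji_eq hrpos hspos hner hnes, jac]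
  gcongr
  linarith

end Fuji

section Reparametrization

variable {n : ℕ} {r s : Fin n → ℝ} {k : ℕ} {f : ℝ → ℝ}

lemma rankOf_comp (hf : StrictMono f) : rankOf (f ∘ s) = rankOf s := by
  funext x
  simp [rankOf, hf.le_iff_le]

lemma topk_comp (hf : StrictMono f) : topk (f ∘ s) k = topk s k := by
  rw [topk, topk, rankOf_comp hf]

lemma kthScore_comp (hf : StrictMono f) (hne : (topk s k).Nonempty) :
    kthScore (f ∘ s) k = f (kthScore s k) := by
  simp only [kthScore, topk_comp hf, dif_pos hne]
  exact (apply_inf'_eq_inf'_comp hne f fun _ _ => hf.monotone.map_min).symm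

lemma fmu_pow_of_notMem {m : ℕ} (hm : Odd m) (hne : (topk s k).Nonempty) {x : Fin n}
    (hx : x ∉ topk s k) : fmu ((· ^ m) ∘ s) k x = fmu s k x ^ m := by
  rw [fmu_of_notMem (by rwa [topk_comp hm.strictMono_pow]), kthScore_comp hm.strictMono_pow hne,
    fmu_of_notMem hx, div_pow, Function.comp_apply]

lemma fuji_pow_lt {m : ℕ} (hm : Odd m) (hm1 : 1 < m) (hrpos : ∀ i, 0 < r i)
    (hspos : ∀ i, 0 < s i) (hner : (topk r k).Nonempty) (hnes : (topk s k).Nonempty)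
    (hdiff : (topk r k \ topk s k).Nonempty) : fuji r ((· ^ m) ∘ s) k < fuji r s k := by
  have hmono := hm.strictMono_pow (R := ℝ)
  have hspos' : ∀ i, 0 < ((· ^ m) ∘ s) i := fun i => pow_pos (hspos i) m
  have hlt : ∑ x ∈ topk r k \ topk s k, fmu ((· ^ m) ∘ s) k x <
      ∑ x ∈ topk r k \ topk s k, fmu s k x := by
    refine sum_lt_sum_of_nonempty hdiff fun x hx => ?_
    have hxs := (mem_sdiff.1 hx).2
    rw [fmu_pow_of_notMem hm hnes hxs]
    exact pow_lt_self_of_lt_one₀ (fmu_pos hspos hnes) (fmu_lt_one hspos hnes hxs) hm1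
  rw [fuji_eq hrpos hspos' hner (by rwa [topk_comp hmono]), fuji_eq hrpos hspos hner hnes,
    topk_comp hmono]
  gcongr

end Reparametrization

section Reversed

variable {n : ℕ} {r s : Fin n → ℝ} {k : ℕ}

lemma card_inter_topk_of_rev (hr : Function.Injective r)
    (hsrev : ∀ x, rankOf s x = n + 1 - rankOf r x) (hk : k ≤ n) :
    (#(topk r k ∩ topk s k) : ℝ) = max 0 (2 * (k : ℝ) - n) := by
  have hI : topk r k ∩ topk s k =
      ({x | rankOf r x ≤ k ∧ n + 1 - rankOf r x ≤ k} : Finset (Fin n)) := by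
    ext x
    simp [mem_topk, hsrev]
  have hIcc : {m ∈ Icc 1 n | m ≤ k ∧ n + 1 - m ≤ k} = Icc (n + 1 - k) k := by
    ext m
    simp only [mem_filter, mem_Icc]
    omega
  rw [hI, card_filter_rankOf hr (fun m => m ≤ k ∧ n + 1 - m ≤ k), hIcc, Nat.card_Icc]
  rcases le_total (2 * k) n with h | h
  · rw [max_eq_left (by rw [sub_nonpos]; exact_mod_cast h), Nat.sub_eq_zero_of_le (by omega),
      Nat.cast_zero]
  · have hcard : k + 1 - (n + 1 - k) = 2 * k - n := by omega
    rw [max_eq_right (by rw [sub_nonneg]; exact_mod_cast h), hcard, Nat.cast_sub h]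
    push_cast
    ring

lemma card_union_topk_of_rev (hr : Function.Injective r) (hs : Function.Injective s)
    (hsrev : ∀ x, rankOf s x = n + 1 - rankOf r x) (hk : k ≤ n) :
    (#(topk r k ∪ topk s k) : ℝ) = min (2 * (k : ℝ)) n := by
  have h := card_union_add_card_inter (topk r k) (topk s k)
  rw [card_topk hr hk, card_topk hs hk, ← two_mul] at h
  have h' : (#(topk r k ∪ topk s k) : ℝ) + #(topk r k ∩ topk s k) = 2 * k := by
    exact_mod_cast h
  rw [card_inter_topk_of_rev hr hsrev hk] at h'
  rw [eq_sub_of_add_eq h']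
  rcases le_total (2 * (k : ℝ)) n with h | h
  · rw [max_eq_left (by linarith), min_eq_left h, sub_zero]
  · rw [max_eq_right (by linarith), min_eq_right h]
    ring

lemma jac_of_rev (hr : Function.Injective r) (hs : Function.Injective s)
    (hsrev : ∀ x, rankOf s x = n + 1 - rankOf r x) (hk : k ≤ n) :
    jac r s k = max (0 : ℝ) (2 * k - n) / min (2 * k : ℝ) (n : ℝ) := by
  rw [jac, card_inter_topk_of_rev hr hsrev hk, card_union_topk_of_rev hr hs hsrev hk]

lemma sdiff_topk_nonempty_of_rev (hr : Function.Injective r)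
    (hsrev : ∀ x, rankOf s x = n + 1 - rankOf r x) (hk1 : 1 ≤ k) (hkn : k < n) :
    (topk r k \ topk s k).Nonempty := by
  obtain ⟨x, hx⟩ := exists_rankOf_eq_one hr (by omega)
  refine ⟨x, mem_sdiff.2 ⟨?_, ?_⟩⟩ <;> rw [mem_topk]
  · omega
  · rw [hsrev, hx]
    omega

end Reversed

theorem fuji_infimum_not_attained {n : ℕ} (r : Fin n → ℝ)
    (hr : Function.Injective r) (hrpos : ∀ i, 0 < r i)
    (k : ℕ) (hk1 : 1 ≤ k) (hkn : k < n)
    (s : Fin n → ℝ) (hs : Function.Injective s) (hspos : ∀ i, 0 < s i)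
    (hsrev : ∀ x, rankOf s x = n + 1 - rankOf r x) :
    (∃ s' : Fin n → ℝ, Function.Injective s' ∧ (∀ i, 0 < s' i) ∧
        (∀ x, rankOf s' x = n + 1 - rankOf r x) ∧
        fuji r s' k < fuji r s k) ∧
    max (0 : ℝ) (2 * k - n) / min (2 * k : ℝ) (n : ℝ) < fuji r s k := by
  have hner := topk_nonempty hr hk1 hkn.le
  have hnes := topk_nonempty hs hk1 hkn.le
  have hdiff := sdiff_topk_nonempty_of_rev hr hsrev hk1 hkn
  have hcube : StrictMono fun t : ℝ => t ^ 3 := Odd.strictMono_pow (by decide)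
  refine ⟨⟨(· ^ 3) ∘ s, hcube.injective.comp hs, fun i => pow_pos (hspos i) 3,
    fun x => by rw [rankOf_comp hcube, hsrev],
    fuji_pow_lt (by decide) (by norm_num) hrpos hspos hner hnes hdiff⟩, ?_⟩
  rw [← jac_of_rev hr hs hsrev hkn.le]
  exact jac_lt_fuji hrpos hspos hner hnes hdiff
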